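/- arXiv:1203.2170 — 9 statements merged into one kernel-verified Lean document; each statement's English description precedes it below -/
import Mathlib

section
/- If z_{n+1} = z_n/(1 + B z_{n-1} - B z_n) and z_n ≠ 0, z_{n+1} ≠ 0 (all terms well-defined), then (1/z_{n+1} + B)(1 + B z_n) = (1/z_n + B)(1 + B z_{n-1}). That is, the quantity (1/z_n + B)(1 + B z_{n-1}) is invariant along solutions. -/
theorem stmt0_general (B z1 z2 z3 : ℂ) (h2 : z2 ≠ 0)
    (hrec : z3 = z2 / (1 + B * z1 - B * z2)) :
    (1 / z3 + B) * (1 + B * z2) = (1 / z2 + B) * (1 + B * z1) := by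
  rw [hrec, one_div_div]
  field_simp
  ring

theorem stmt0 (B z1 z2 z3 : ℂ) (hB : B ≠ 0) (h2 : z2 ≠ 0) (h3 : z3 ≠ 0)
    (hd : 1 + B * z1 - B * z2 ≠ 0)
    (hrec : z3 = z2 / (1 + B * z1 - B * z2)) :
    (1 / z3 + B) * (1 + B * z2) = (1 / z2 + B) * (1 + B * z1) :=
  stmt0_general B z1 z2 z3 h2 hrec
end

section
/- If z_{n+1} = z_{n-1}/(1 + B z_n - B z_{n-1}) with z_{n-1}, z_n nonzero and the denominator nonzero, then (1/z_{n+1} + B)(1/z_n) = (1/z_n + B)(1/z_{n-1}). That is, (1/z_n + B)(1/z_{n-1}) is invariant along solutions. -/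
theorem one_div_add_eq_of_eq_div {K : Type*} [Field K] {B z1 z2 z3 : K} (h1 : z1 ≠ 0)
    (hrec : z3 = z1 / (1 + B * z2 - B * z1)) :
    1 / z3 + B = (1 + B * z2) / z1 := by
  rw [hrec, one_div_div]
  field_simp
  ring

theorem stmt1_general (B z1 z2 z3 : ℂ) (h1 : z1 ≠ 0) (h2 : z2 ≠ 0)
    (hrec : z3 = z1 / (1 + B * z2 - B * z1)) :
    (1 / z3 + B) * (1 / z2) = (1 / z2 + B) * (1 / z1) := by
  rw [one_div_add_eq_of_eq_div h1 hrec]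
  field_simp

theorem stmt1 (B z1 z2 z3 : ℂ) (hB : B ≠ 0) (h1 : z1 ≠ 0) (h2 : z2 ≠ 0)
    (hd : 1 + B * z2 - B * z1 ≠ 0)
    (hrec : z3 = z1 / (1 + B * z2 - B * z1)) :
    (1 / z3 + B) * (1 / z2) = (1 / z2 + B) * (1 / z1) :=
  stmt1_general B z1 z2 z3 h1 h2 hrec
end

section
/- Suppose a sequence (z_n)_{n ≥ -1} of complex numbers satisfies, for all n ≥ 0, the conditions z_{n-1} ≠ 0, z_n ≠ 0, and z_{n+1} = (z_n² + B z_n - B z_{n-1})/z_{n-1}. Let C = (z_0 + B)/z_{-1}. Then z_{n+1} = C z_n - B for all n ≥ 0, and consequently z_n = C^n z_0 - B·(sum over k from 1 to n of C^{k-1}) for all n ≥ 1. -/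
/-!
Multiplying the recurrence by `z_{n-1}` gives `(z_{n+1} + B) z_{n-1} = (z_n + B) z_n`, so the ratio
`(z_{n+1} + B) / z_n` does not depend on `n`; it equals `C`. The resulting affine first-order
recurrence `z_{n+1} = C z_n - B` unrolls to a geometric sum.
-/

open Finset

lemma add_eq_mul_of_add_eq_mul {K : Type*} [Field K] {B C a b c : K} (ha : a ≠ 0)
    (hc : c = (b ^ 2 + B * b - B * a) / a) (hb : b + B = C * a) : c + B = C * b := by
  rw [hc]
  field_simp
  linear_combination b * hb

lemma eq_pow_mul_sub_mul_geom_sum {R : Type*} [CommRing R] {B C : R} {x : ℕ → R}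
    (hx : ∀ n, x (n + 1) = C * x n - B) (n : ℕ) :
    x n = C ^ n * x 0 - B * ∑ k ∈ range n, C ^ k := by
  induction n with
  | zero => simp
  | succ n ih =>
    rw [hx n, ih, geom_sum_succ, pow_succ']
    ring

/-- `z n` denotes the term of index `n - 1`, so `z 0 = z_{-1}`, `z 1 = z_0`. -/
theorem stmt6 (B : ℂ) (z : ℕ → ℂ) (hz : ∀ n, z n ≠ 0)
    (hrec : ∀ n, z (n + 2) = ((z (n + 1)) ^ 2 + B * z (n + 1) - B * z n) / z n)
    (C : ℂ) (hC : C = (z 1 + B) / z 0) :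
    (∀ n, z (n + 2) = C * z (n + 1) - B) ∧
      (∀ n, 1 ≤ n → z (n + 1) = C ^ n * z 1 - B * ∑ k ∈ Finset.range n, C ^ k) := by
  have hinv : ∀ n, z (n + 1) + B = C * z n := by
    intro n
    induction n with
    | zero => rw [hC, div_mul_cancel₀ _ (hz 0)]
    | succ n ih => exact add_eq_mul_of_add_eq_mul (hz n) (hrec n) ih
  have haffine : ∀ n, z (n + 2) = C * z (n + 1) - B := fun n => eq_sub_of_add_eq (hinv (n + 1))
  exact ⟨haffine, fun n _ => eq_pow_mul_sub_mul_geom_sum (x := fun n => z (n + 1)) haffine n⟩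
end

section
/- Suppose a sequence (z_n)_{n ≥ -1} of complex numbers satisfies z_n ≠ -B for all n ≥ -1, z_0 ≠ 0, and z_{n+1} = (z_n² + B z_n)/(z_{n-1} + B) for all n ≥ 0. Let C = (z_{-1} + B)/z_0; then C ≠ 0, z_n ≠ 0 for all n ≥ 0, z_{n+1} = (z_n + B)/C for all n ≥ 0, and z_n = z_0/C^n + B·(sum over k from 1 to n of 1/C^k) for all n ≥ 1. -/
/-!
The ratio `(z_{n-1} + B) / z_n` is conserved: if `z_{n-1} + B = C z_n`, the recurrence gives
`z_{n+1} = z_n (z_n + B) / (C z_n) = (z_n + B) / C`, i.e. `z_n + B = C z_{n+1}`. Hence the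
sequence obeys the affine recurrence `z_{n+1} = (z_n + B) / C`, which unrolls to the closed form.
-/

theorem affine_recurrence_closed_form {K : Type*} [Field K] {B C : K} (hC : C ≠ 0) {w : ℕ → K}
    (hw : ∀ n, w (n + 1) = (w n + B) / C) (n : ℕ) :
    w n = w 0 / C ^ n + B * ∑ k ∈ Finset.Icc 1 n, 1 / C ^ k := by
  induction n generalizing w with
  | zero => simp
  | succ n ih =>
    rw [ih (w := fun m => w (m + 1)) (fun m => hw (m + 1)), hw 0,
      Finset.sum_Icc_succ_top (by omega)]
    field_simp
    ring

theorem add_eq_mul_succ_of_recurrence {K : Type*} [Field K] {B C : K} {z : ℕ → K}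
    (hz : ∀ n, z n + B ≠ 0)
    (hrec : ∀ n, z (n + 2) = (z (n + 1) ^ 2 + B * z (n + 1)) / (z n + B))
    (h0 : z 0 + B = C * z 1) : ∀ n, z n + B = C * z (n + 1)
  | 0 => h0
  | n + 1 => by
    have ih := add_eq_mul_succ_of_recurrence hz hrec h0 n
    have hne : C * z (n + 1) ≠ 0 := ih ▸ hz n
    have hC : C ≠ 0 := left_ne_zero_of_mul hne
    have hz' : z (n + 1) ≠ 0 := right_ne_zero_of_mul hne
    rw [hrec n, ih]
    field_simp

theorem stmt7_general (B : ℂ) (z : ℕ → ℂ) (hz : ∀ n, z n ≠ -B) (h0 : z 1 ≠ 0)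
    (hrec : ∀ n, z (n + 2) = ((z (n + 1)) ^ 2 + B * z (n + 1)) / (z n + B))
    (C : ℂ) (hC : C = (z 0 + B) / z 1) :
    C ≠ 0 ∧ (∀ n, z (n + 1) ≠ 0) ∧ (∀ n, z (n + 2) = (z (n + 1) + B) / C) ∧
      (∀ n, 1 ≤ n → z (n + 1) = z 1 / C ^ n + B * ∑ k ∈ Finset.Icc 1 n, 1 / C ^ k) := by
  have hzB : ∀ n, z n + B ≠ 0 := fun n h => hz n (eq_neg_of_add_eq_zero_left h)
  have hCz : ∀ n, z n + B = C * z (n + 1) :=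
    add_eq_mul_succ_of_recurrence hzB hrec (by rw [hC]; field_simp)
  have hCz_ne : ∀ n, C * z (n + 1) ≠ 0 := fun n => hCz n ▸ hzB n
  have hC0 : C ≠ 0 := left_ne_zero_of_mul (hCz_ne 0)
  have hstep : ∀ n, z (n + 2) = (z (n + 1) + B) / C := fun n => by
    rw [hCz (n + 1)]
    field_simp
  exact ⟨hC0, fun n => right_ne_zero_of_mul (hCz_ne n), hstep,
    fun n _ => affine_recurrence_closed_form (w := fun m => z (m + 1)) hC0 hstep n⟩

/-- `z n` denotes the term of index `n - 1`, so `z 0 = z_{-1}`, `z 1 = z_0`. -/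
theorem stmt7 (B : ℂ) (hB : B ≠ 0) (z : ℕ → ℂ) (hz : ∀ n, z n ≠ -B) (h0 : z 1 ≠ 0)
    (hrec : ∀ n, z (n + 2) = ((z (n + 1)) ^ 2 + B * z (n + 1)) / (z n + B))
    (C : ℂ) (hC : C = (z 0 + B) / z 1) :
    C ≠ 0 ∧ (∀ n, z (n + 1) ≠ 0) ∧ (∀ n, z (n + 2) = (z (n + 1) + B) / C) ∧
      (∀ n, 1 ≤ n → z (n + 1) = z 1 / C ^ n + B * ∑ k ∈ Finset.Icc 1 n, 1 / C ^ k) :=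
  stmt7_general B z hz h0 hrec C hC
end

section
/- Suppose a sequence (z_n)_{n ≥ -1} of complex numbers satisfies z_0 ≠ 0, z_{-1} = -1/B, the recurrence z_{n+1} = z_n/(1 + B z_{n-1} - B z_n) for all n ≥ 0 with all denominators nonzero, and z_n ≠ 0 for all n. Then z_{2n+1} = -1/B for all n ≥ 0, and z_{2n} = -1/(2B + B² z_{2n-2}) for all n ≥ 1. -/
/-!
If `z_{n-1} = -1/B`, the denominator `1 + B z_{n-1} - B z_n` collapses to `-B z_n`, so
`z_{n+1} = -1/B` again. Hence every term of odd index is `-1/B`, and substituting this into the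
recurrence at the even indices gives `z_{2n} = (-1/B) / (2 + B z_{2n-2})`.
-/

section

variable {K : Type*} [Field K] {B : K}

theorem div_one_add_mul_neg_one_div_sub_mul (hB : B ≠ 0) {x : K} (hx : x ≠ 0) :
    x / (1 + B * (-1 / B) - B * x) = -1 / B := by
  rw [mul_div_cancel₀ _ hB, add_neg_cancel, zero_sub, div_neg, div_mul_cancel_right₀ hx,
    neg_div, one_div]

theorem neg_one_div_div_one_add_mul_sub_mul_neg_one_div (B y : K) :
    -1 / B / (1 + B * y - B * (-1 / B)) = -1 / (2 * B + B ^ 2 * y) := by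
  rcases eq_or_ne B 0 with rfl | hB
  · simp
  · rw [div_div, mul_div_cancel₀ _ hB]
    congr 1
    ring

theorem eq_neg_one_div_of_even (hB : B ≠ 0) {z : ℕ → K}
    (hrec : ∀ n, z (n + 2) = z (n + 1) / (1 + B * z n - B * z (n + 1)))
    (hz : ∀ n, z (n + 1) ≠ 0) (hz₀ : z 0 = -1 / B) (n : ℕ) : z (2 * n) = -1 / B := by
  induction n with
  | zero => exact hz₀
  | succ n ih =>
    rw [show 2 * (n + 1) = 2 * n + 2 by ring, hrec, ih,
      div_one_add_mul_neg_one_div_sub_mul hB (hz _)]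

end

theorem stmt12_general (B : ℂ) (hB : B ≠ 0) (z : ℕ → ℂ)
    (hrec : ∀ n, z (n + 2) = z (n + 1) / (1 + B * z n - B * z (n + 1)))
    (hz : ∀ n, z (n + 1) ≠ 0)
    (hm1 : z 0 = -1 / B) :
    (∀ n, z (2 * n + 2) = -1 / B) ∧
      (∀ n : ℕ, z (2 * n + 3) = -1 / (2 * B + B ^ 2 * z (2 * n + 1))) := by
  have heven := eq_neg_one_div_of_even hB hrec hz hm1
  refine ⟨fun n => heven (n + 1), fun n => ?_⟩
  rw [hrec (2 * n + 1), show 2 * n + 1 + 1 = 2 * (n + 1) from rfl, heven,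
    neg_one_div_div_one_add_mul_sub_mul_neg_one_div]

/-- `z n` denotes the term of index `n - 1`, so `z 0 = z_{-1}`, `z 1 = z_0`. -/
theorem stmt12 (B : ℂ) (hB : B ≠ 0) (z : ℕ → ℂ)
    (hd : ∀ n, 1 + B * z n - B * z (n + 1) ≠ 0)
    (hrec : ∀ n, z (n + 2) = z (n + 1) / (1 + B * z n - B * z (n + 1)))
    (hz : ∀ n, z (n + 1) ≠ 0)
    (h0 : z 1 ≠ 0) (hm1 : z 0 = -1 / B) :
    (∀ n, z (2 * n + 2) = -1 / B) ∧
      (∀ n : ℕ, z (2 * n + 3) = -1 / (2 * B + B ^ 2 * z (2 * n + 1))) :=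
  stmt12_general B hB z hrec hz hm1
end

section
/- Suppose a sequence (z_n)_{n ≥ -1} of complex numbers satisfies z_n ≠ 0 for all n ≥ -1, z_0 ≠ -1/B, and the recurrence z_{n+1} = z_{n-1}/(1 + B z_n - B z_{n-1}) for all n ≥ 0 with all denominators nonzero. Let C = (1/z_0 + B)/z_{-1}. Then C ≠ 0 and z_{n+1} = 1/(C z_n - B) for all n ≥ 0; in particular C z_n - B ≠ 0 for all n ≥ 0. -/
/-!
The quantity `(1 / z_n + B) / z_{n-1}` is an invariant of the recurrence: substituting
`1 / z_{n+1} = (1 + B z_n - B z_{n-1}) / z_{n-1}` turns `(1 / z_{n+1} + B) / z_n` into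
`(1 + B z_n) / (z_{n-1} z_n)`. Hence it equals its initial value `C` for all `n`, which is
the first-order recurrence `C z_n - B = 1 / z_{n+1}`.
-/

section

variable {K : Type*} [Field K] {B : K} {z : ℕ → K}

theorem denom_ne_zero_of_rec (hz : ∀ n, z n ≠ 0)
    (hrec : ∀ n, z (n + 2) = z n / (1 + B * z (n + 1) - B * z n)) (n : ℕ) :
    1 + B * z (n + 1) - B * z n ≠ 0 := by
  intro h
  apply hz (n + 2)
  rw [hrec, h, div_zero]

theorem rec_invariant_succ (hz : ∀ n, z n ≠ 0)
    (hrec : ∀ n, z (n + 2) = z n / (1 + B * z (n + 1) - B * z n)) (n : ℕ) :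
    (1 / z (n + 2) + B) / z (n + 1) = (1 / z (n + 1) + B) / z n := by
  have := denom_ne_zero_of_rec hz hrec n
  have := hz n
  have := hz (n + 1)
  rw [hrec n, one_div_div]
  field_simp
  ring

theorem rec_invariant_eq (hz : ∀ n, z n ≠ 0)
    (hrec : ∀ n, z (n + 2) = z n / (1 + B * z (n + 1) - B * z n)) (n : ℕ) :
    (1 / z (n + 1) + B) / z n = (1 / z 1 + B) / z 0 := by
  induction n with
  | zero => rfl
  | succ n ih => rw [rec_invariant_succ hz hrec, ih]

end

theorem stmt14_general (B : ℂ) (z : ℕ → ℂ)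
    (hz : ∀ n, z n ≠ 0) (h0 : z 1 ≠ -1 / B)
    (hrec : ∀ n, z (n + 2) = z n / (1 + B * z (n + 1) - B * z n))
    (C : ℂ) (hC : C = (1 / z 1 + B) / z 0) :
    C ≠ 0 ∧ (∀ n, C * z (n + 1) - B ≠ 0) ∧
      (∀ n, z (n + 2) = 1 / (C * z (n + 1) - B)) := by
  have hnum : 1 / z 1 + B ≠ 0 := by
    intro h
    apply h0
    rw [eq_neg_of_add_eq_zero_right h, neg_div_neg_eq, one_div_one_div]
  have hfirst : ∀ n, C * z (n + 1) - B = 1 / z (n + 2) := by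
    intro n
    rw [hC, ← rec_invariant_eq hz hrec (n + 1), div_mul_cancel₀ _ (hz (n + 1)),
      add_sub_cancel_right]
  refine ⟨hC ▸ div_ne_zero hnum (hz 0), fun n => ?_, fun n => ?_⟩
  · rw [hfirst]
    exact one_div_ne_zero (hz (n + 2))
  · rw [hfirst, one_div_one_div]

/-- `z n` denotes the term of index `n - 1`, so `z 0 = z_{-1}`, `z 1 = z_0`. -/
theorem stmt14 (B : ℂ) (hB : B ≠ 0) (z : ℕ → ℂ)
    (hz : ∀ n, z n ≠ 0) (h0 : z 1 ≠ -1 / B)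
    (hd : ∀ n, 1 + B * z (n + 1) - B * z n ≠ 0)
    (hrec : ∀ n, z (n + 2) = z n / (1 + B * z (n + 1) - B * z n))
    (C : ℂ) (hC : C = (1 / z 1 + B) / z 0) :
    C ≠ 0 ∧ (∀ n, C * z (n + 1) - B ≠ 0) ∧
      (∀ n, z (n + 2) = 1 / (C * z (n + 1) - B)) :=
  stmt14_general B z hz h0 hrec C hC
end

section
/- Suppose a sequence (z_n)_{n ≥ -1} of complex numbers satisfies z_n ≠ 0 for all n ≥ -1, z_0 ≠ -1/B, z_{-1} ≠ -1/B, and the recurrence z_{n+1} = z_n/(1 + B z_{n-1} - B z_n) for all n ≥ 0 with all denominators nonzero. Let C = (1/z_0 + B)(1 + B z_{-1}). Then C ≠ 0, z_n ≠ (C - B)/B² for all n ≥ 0, and z_{n+1} = (1 + B z_n)/(C - B - B² z_n) for all n ≥ 0. -/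
/-!
The quantity `(1 + B z_n)(1 + B z_{n-1}) / z_n` is a first integral of the recurrence: it equals
`C` for every `n`. Read at index `n + 1` and solved for `z_{n+1}`, the identity
`(1 + B z_{n+1})(1 + B z_n) = C z_{n+1}` is the first-order recurrence
`(C - B - B² z_n) z_{n+1} = 1 + B z_n`, and both `C` and its denominators are nonzero because no
factor `1 + B z_n` vanishes.
-/

section
variable {K : Type*} [Field K] {B C : K} {z : ℕ → K}

theorem one_add_mul_ne_zero_of_ne_neg_one_div (hB : B ≠ 0) {x : K} (hx : x ≠ -1 / B) :
    1 + B * x ≠ 0 := by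
  contrapose! hx
  field_simp
  linear_combination hx

theorem recurrence_invariant (hz1 : z 1 ≠ 0) (hd : ∀ n, 1 + B * z n - B * z (n + 1) ≠ 0)
    (hrec : ∀ n, z (n + 2) = z (n + 1) / (1 + B * z n - B * z (n + 1)))
    (hC : C = (1 / z 1 + B) * (1 + B * z 0)) (n : ℕ) :
    (1 + B * z (n + 1)) * (1 + B * z n) = C * z (n + 1) := by
  induction n with
  | zero =>
    rw [hC]
    field_simp
  | succ k ih =>
    rw [hrec k]
    field_simp [hd k]
    linear_combination ih

theorem one_add_mul_ne_zero_of_invariant {x y : K} (hinv : (1 + B * x) * y = C * x)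
    (hC : C ≠ 0) (hx : x ≠ 0) : 1 + B * x ≠ 0 := by
  intro h
  rw [h, zero_mul] at hinv
  exact mul_ne_zero hC hx hinv.symm

theorem first_order_recurrence_of_invariant
    (hinv : ∀ n, (1 + B * z (n + 1)) * (1 + B * z n) = C * z (n + 1)) (n : ℕ) :
    (C - B - B ^ 2 * z (n + 1)) * z (n + 2) = 1 + B * z (n + 1) := by
  linear_combination -hinv (n + 1)

end

/-- `z n` denotes the term of index `n - 1`, so `z 0 = z_{-1}`, `z 1 = z_0`. -/
theorem stmt15 (B : ℂ) (hB : B ≠ 0) (z : ℕ → ℂ)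
    (hz : ∀ n, z n ≠ 0) (h0 : z 1 ≠ -1 / B) (hm1 : z 0 ≠ -1 / B)
    (hd : ∀ n, 1 + B * z n - B * z (n + 1) ≠ 0)
    (hrec : ∀ n, z (n + 2) = z (n + 1) / (1 + B * z n - B * z (n + 1)))
    (C : ℂ) (hC : C = (1 / z 1 + B) * (1 + B * z 0)) :
    C ≠ 0 ∧ (∀ n, z (n + 1) ≠ (C - B) / B ^ 2) ∧
      (∀ n, z (n + 2) = (1 + B * z (n + 1)) / (C - B - B ^ 2 * z (n + 1))) := by
  have hinv := recurrence_invariant (hz 1) hd hrec hC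
  have hC0 : C ≠ 0 := by
    intro h
    have h0' := hinv 0
    rw [h, zero_mul] at h0'
    exact mul_ne_zero (one_add_mul_ne_zero_of_ne_neg_one_div hB h0)
      (one_add_mul_ne_zero_of_ne_neg_one_div hB hm1) h0'
  have hfirst := first_order_recurrence_of_invariant hinv
  have hden : ∀ n, C - B - B ^ 2 * z (n + 1) ≠ 0 := fun n h ↦ by
    have hn := hfirst n
    rw [h, zero_mul] at hn
    exact one_add_mul_ne_zero_of_invariant (hinv n) hC0 (hz (n + 1)) hn.symm
  refine ⟨hC0, fun n h ↦ hden n ?_, fun n ↦ (eq_div_iff (hden n)).2 ?_⟩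
  · rw [h]
    field_simp
    ring
  · linear_combination hfirst n
end

section
/- Consider x_{n+1} = (α + β x_n)/(A + B x_n) over ℂ with B ≠ 0, αB - βA ≠ 0, and β + A = 0. If x_0 ≠ -A/B, then the sequence is well-defined for all n, x_{2n} = x_0 for all n ≥ 0, and x_{2n+1} = (α + β x_0)/(A + B x_0) for all n ≥ 0 (i.e., every solution is periodic with period 2). -/
/-!
When `β + A = 0` the Möbius map `f y = (α + β y) / (A + B y)` has trace-zero matrix
`[[β, α], [B, A]]`, whose square is the scalar `αB - βA ≠ 0`; hence `f ∘ f = id` wherever both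
denominators are nonzero. The identity `(A + B y) (A + B f(y)) = αB - βA` shows that the set
`A + B y ≠ 0` is mapped into itself, so the orbit never leaves it and alternates between
`x₀` and `f(x₀)`.
-/

open Set

section Involution

variable {X : Type*} {f : X → X} {S : Set X} {x : ℕ → X}

theorem mem_of_mapsTo_of_succ (hS : MapsTo f S S) (hx : ∀ n, x (n + 1) = f (x n))
    (h0 : x 0 ∈ S) (n : ℕ) : x n ∈ S := by
  induction n with
  | zero => exact h0
  | succ n ih => rw [hx]; exact hS ih

theorem eq_of_two_mul_of_involutive_on (hf : ∀ y ∈ S, f (f y) = y)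
    (hx : ∀ n, x (n + 1) = f (x n)) (h0 : x 0 ∈ S) (n : ℕ) : x (2 * n) = x 0 := by
  induction n with
  | zero => rfl
  | succ n ih => rw [Nat.mul_succ, hx, hx, ih, hf _ h0]

end Involution

section Mobius

variable {K : Type*} [Field K] (α β A B : K)

def mobius (y : K) : K := (α + β * y) / (A + B * y)

variable {A B} in
theorem mobius_mul_denom {y : K} (hy : A + B * y ≠ 0) :
    mobius α β A B y * (A + B * y) = α + β * y :=
  div_mul_cancel₀ _ hy

variable {α β A B}

theorem mul_denom_mobius (hβA : β + A = 0) {y : K} (hy : A + B * y ≠ 0) :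
    (A + B * y) * (A + B * mobius α β A B y) = α * B - β * A := by
  linear_combination B * mobius_mul_denom α β hy + (A + B * y) * hβA

theorem denom_mobius_ne_zero (hβA : β + A = 0) (hdet : α * B - β * A ≠ 0) {y : K}
    (hy : A + B * y ≠ 0) : A + B * mobius α β A B y ≠ 0 :=
  right_ne_zero_of_mul (mul_denom_mobius hβA hy ▸ hdet)

theorem mobius_mobius (hβA : β + A = 0) (hdet : α * B - β * A ≠ 0) {y : K}
    (hy : A + B * y ≠ 0) : mobius α β A B (mobius α β A B y) = y := by
  rw [mobius, div_eq_iff (denom_mobius_ne_zero hβA hdet hy)]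
  linear_combination (mobius α β A B y - y) * hβA - mobius_mul_denom α β hy

end Mobius

theorem stmt17 (α β A B : ℂ) (hB : B ≠ 0) (hdet : α * B - β * A ≠ 0) (hβA : β + A = 0)
    (x : ℕ → ℂ) (h0 : x 0 ≠ -A / B)
    (hrec : ∀ n, x (n + 1) = (α + β * x n) / (A + B * x n)) :
    (∀ n, A + B * x n ≠ 0) ∧ (∀ n, x (2 * n) = x 0) ∧
      (∀ n, x (2 * n + 1) = (α + β * x 0) / (A + B * x 0)) := by
  have hx : ∀ n, x (n + 1) = mobius α β A B (x n) := hrec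
  have hdenom₀ : A + B * x 0 ≠ 0 := by
    rwa [Ne, add_eq_zero_iff_eq_neg', mul_comm, ← eq_div_iff hB]
  have hmaps : MapsTo (mobius α β A B) {y | A + B * y ≠ 0} {y | A + B * y ≠ 0} :=
    fun _ hy ↦ denom_mobius_ne_zero hβA hdet hy
  have heven : ∀ n, x (2 * n) = x 0 :=
    eq_of_two_mul_of_involutive_on (fun _ hy ↦ mobius_mobius hβA hdet hy) hx hdenom₀
  exact ⟨mem_of_mapsTo_of_succ hmaps hx hdenom₀, heven, fun n ↦ by rw [hx, heven, mobius]⟩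
end

section
/- Suppose a sequence (z_n)_{n ≥ -1} of nonzero complex numbers satisfies the recurrence z_{n+1} = (z_n² + B z_n - B z_{n-1})/z_{n-1} for all n ≥ 0, and suppose C = (z_0 + B)/z_{-1} = 1. Then z_n = z_0 - nB for all n ≥ 0; consequently, if additionally z_0 = NB for some natural number N ≥ 1, then z_N = 0, a contradiction — hence no such everywhere-nonzero solution exists with C = 1 and z_0 ∈ {nB : n ∈ ℕ, n ≥ 1} when B ≠ 0. -/
/-!
The condition `C = 1` says `z_{-1} = z_0 + B`, and the recurrence propagates the relation
`z_{n-1} = z_n + B`: under it the numerator `z_n² + B z_n - B z_{n-1}` factors as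
`(z_n - B) z_{n-1}`, so `z_{n+1} = z_n - B`. Hence `z` is an arithmetic progression with
difference `-B`, and `z_0 = N B` would force `z_N = 0`.
-/

theorem add_eq_of_recurrence_step {K : Type*} [Field K] {B x y w : K} (hx : x ≠ 0)
    (hyx : y + B = x) (hw : w = (y ^ 2 + B * y - B * x) / x) : w + B = y := by
  rw [hw, div_add' _ _ _ hx, div_eq_iff hx]
  linear_combination y * hyx

theorem recurrence_add_eq {K : Type*} [Field K] {B : K} {z : ℕ → K} (hz : ∀ n, z n ≠ 0)
    (hrec : ∀ n, z (n + 2) = (z (n + 1) ^ 2 + B * z (n + 1) - B * z n) / z n)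
    (h0 : z 1 + B = z 0) (n : ℕ) : z (n + 1) + B = z n := by
  induction n with
  | zero => exact h0
  | succ k ih => exact add_eq_of_recurrence_step (hz k) ih (hrec k)

theorem eq_sub_nsmul_of_succ_add_eq {G : Type*} [AddCommGroup G] {B : G} {z : ℕ → G}
    (h : ∀ n, z (n + 1) + B = z n) (n : ℕ) : z n = z 0 - n • B := by
  induction n with
  | zero => simp
  | succ k ih => rw [succ_nsmul, ← sub_sub, ← ih, ← h k, add_sub_cancel_right]

theorem stmt19_general (B : ℂ) (z : ℕ → ℂ) (hz : ∀ n, z n ≠ 0)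
    (hrec : ∀ n, z (n + 2) = ((z (n + 1)) ^ 2 + B * z (n + 1) - B * z n) / z n)
    (hC : (z 1 + B) / z 0 = 1) :
    (∀ n : ℕ, z (n + 1) = z 1 - (n : ℂ) * B) ∧
      (∀ N : ℕ, 1 ≤ N → z 1 ≠ (N : ℂ) * B) := by
  have h0 : z 1 + B = z 0 := (div_eq_one_iff_eq (hz 0)).mp hC
  have progression (n : ℕ) : z (n + 1) = z 1 - (n : ℂ) * B := by
    rw [← nsmul_eq_mul]
    exact eq_sub_nsmul_of_succ_add_eq (z := fun k => z (k + 1))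
      (fun k => recurrence_add_eq hz hrec h0 (k + 1)) n
  refine ⟨progression, fun N _ hN => hz (N + 1) ?_⟩
  rw [progression N, hN, sub_self]

/-- `z n` denotes the term of index `n - 1`, so `z 0 = z_{-1}`, `z 1 = z_0`. -/
theorem stmt19 (B : ℂ) (hB : B ≠ 0) (z : ℕ → ℂ) (hz : ∀ n, z n ≠ 0)
    (hrec : ∀ n, z (n + 2) = ((z (n + 1)) ^ 2 + B * z (n + 1) - B * z n) / z n)
    (hC : (z 1 + B) / z 0 = 1) :
    (∀ n : ℕ, z (n + 1) = z 1 - (n : ℂ) * B) ∧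
      (∀ N : ℕ, 1 ≤ N → z 1 ≠ (N : ℂ) * B) :=
  stmt19_general B z hz hrec hC
end
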